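/- Let q > 1 and α > 0 be real, and set p = q^{α+1/2}, Q = q^{1/2}. Then the quantum R matrix Ř² satisfies the braid-form quantum Yang–Baxter equation: (Ř² ⊗ I₄)(I₄ ⊗ Ř²)(Ř² ⊗ I₄) = (I₄ ⊗ Ř²)(Ř² ⊗ I₄)(I₄ ⊗ Ř²), an identity of 64×64 complex matrices. -/

import Mathlib

open Matrix

noncomputable section

/-- The elementary matrix `E(a,b;c,d)` on `ℂ⁴ ⊗ ℂ⁴`. -/
def E (a b c d : Fin 4) : Matrix (Fin 4 × Fin 4) (Fin 4 × Fin 4) ℂ :=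
  Matrix.single (a, b) (c, d) 1

/-- `M ⊗ I₄`, acting on the first two factors of `ℂ⁴ ⊗ ℂ⁴ ⊗ ℂ⁴`. -/
def op12 (M : Matrix (Fin 4 × Fin 4) (Fin 4 × Fin 4) ℂ) :
    Matrix (Fin 4 × Fin 4 × Fin 4) (Fin 4 × Fin 4 × Fin 4) ℂ :=
  Matrix.of fun x y => M (x.1, x.2.1) (y.1, y.2.1) * (if x.2.2 = y.2.2 then 1 else 0)

/-- `I₄ ⊗ M`, acting on the last two factors of `ℂ⁴ ⊗ ℂ⁴ ⊗ ℂ⁴`. -/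
def op23 (M : Matrix (Fin 4 × Fin 4) (Fin 4 × Fin 4) ℂ) :
    Matrix (Fin 4 × Fin 4 × Fin 4) (Fin 4 × Fin 4 × Fin 4) ℂ :=
  Matrix.of fun x y => (if x.1 = y.1 then 1 else 0) * M (x.2.1, x.2.2) (y.2.1, y.2.2)

/-- The left quantum partial trace `T(C, M)_{a,b} = Σ_{c,d} C_{d,c} M_{(c,a),(d,b)}`. -/
def ptrace (C : Matrix (Fin 4) (Fin 4) ℂ) (M : Matrix (Fin 4 × Fin 4) (Fin 4 × Fin 4) ℂ) :
    Matrix (Fin 4) (Fin 4) ℂ :=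
  Matrix.of fun a b => ∑ c : Fin 4, ∑ d : Fin 4, C d c * M (c, a) (d, b)

/-- The quantum R matrix `Ř²` (Case 2), with real parameters `p, Q`
(indices shifted from 1–4 to 0–3). -/
def R2 (p Q : ℝ) : Matrix (Fin 4 × Fin 4) (Fin 4 × Fin 4) ℂ :=
  E 0 0 0 0
  - ((p ^ 2 * Q⁻¹ ^ 2 : ℝ) : ℂ) • (E 1 1 1 1 + E 2 2 2 2)
  + ((p ^ 4 : ℝ) : ℂ) • E 3 3 3 3
  - ((p * Q⁻¹ * (p * Q⁻¹ - p⁻¹ * Q) : ℝ) : ℂ) • E 1 0 1 0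
  + ((p ^ 3 * Q⁻¹ * (p * Q - p⁻¹ * Q⁻¹) : ℝ) : ℂ) • E 3 2 3 2
  + ((p * Q⁻¹ : ℝ) : ℂ) • (E 0 1 1 0 + E 0 2 2 0 + E 1 0 0 1 + E 2 0 0 2)
  + ((p ^ 3 * Q⁻¹ : ℝ) : ℂ) • (E 1 3 3 1 + E 2 3 3 2 + E 3 1 1 3 + E 3 2 2 3)
  + ((p ^ 2 * Q⁻¹ ^ 2 : ℝ) : ℂ) • (E 0 3 3 0 + E 3 0 0 3)
  - ((p ^ 2 : ℝ) : ℂ) • (E 1 2 2 1 + E 2 1 1 2)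
  - ((p ^ 2 * Q⁻¹ * Real.sqrt ((p * Q⁻¹ - p⁻¹ * Q) * (p * Q - p⁻¹ * Q⁻¹)) : ℝ) : ℂ) •
      (E 3 0 1 2 + E 1 2 3 0)

/-!
In the variables `A = p Q⁻¹`, `B = p Q` and `S = p² Q⁻¹ √((A - A⁻¹)(B - B⁻¹))` every entry of
`Ř²` is a polynomial in `A`, `B`, `S`. Expanding both sides of the braid relation in the
matrix units of `ℂ⁴ ⊗ ℂ⁴ ⊗ ℂ⁴` turns it into polynomial identities between these coefficients,
which hold modulo `S² = A² (A² - 1) (B² - 1)`. For `p = q^(α+1/2)`, `Q = q^(1/2)` we get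
`A = q^α ≥ 1` and `B = q^(α+1) ≥ 1`, so the radicand is nonnegative and this relation holds.
-/

def E3 (a b c d e f : Fin 4) : Matrix (Fin 4 × Fin 4 × Fin 4) (Fin 4 × Fin 4 × Fin 4) ℂ :=
  single (a, b, c) (d, e, f) 1

theorem E3_mul_E3 (a b c d e f a' b' c' d' e' f' : Fin 4) :
    E3 a b c d e f * E3 a' b' c' d' e' f' =
      if (d, e, f) = (a', b', c') then E3 a b c d' e' f' else 0 := by
  split_ifs with h
  · rw [E3, E3, ← h, single_mul_single_same, one_mul]; rfl
  · exact single_mul_single_of_ne _ _ _ _ h _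

theorem op12_add (M N : Matrix (Fin 4 × Fin 4) (Fin 4 × Fin 4) ℂ) :
    op12 (M + N) = op12 M + op12 N := by
  ext; simp only [op12, Matrix.add_apply, of_apply, add_mul]

theorem op12_smul (c : ℂ) (M : Matrix (Fin 4 × Fin 4) (Fin 4 × Fin 4) ℂ) :
    op12 (c • M) = c • op12 M := by
  ext; simp only [op12, Matrix.smul_apply, of_apply, smul_eq_mul, mul_assoc]

theorem op23_add (M N : Matrix (Fin 4 × Fin 4) (Fin 4 × Fin 4) ℂ) :
    op23 (M + N) = op23 M + op23 N := by
  ext; simp only [op23, Matrix.add_apply, of_apply, mul_add]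

theorem op23_smul (c : ℂ) (M : Matrix (Fin 4 × Fin 4) (Fin 4 × Fin 4) ℂ) :
    op23 (c • M) = c • op23 M := by
  ext; simp only [op23, Matrix.smul_apply, of_apply, smul_eq_mul, mul_left_comm]

theorem op12_E (a b c d : Fin 4) : op12 (E a b c d) = ∑ k, E3 a b k c d k := by
  ext ⟨x₁, x₂, x₃⟩ ⟨y₁, y₂, y₃⟩
  simp only [op12, E, E3, single_apply, Prod.mk.injEq, ite_and, mul_ite, mul_one, mul_zero,
    of_apply, Matrix.sum_apply, Finset.sum_ite_irrel, Finset.sum_ite_eq', Finset.mem_univ,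
    reduceIte, Finset.sum_const_zero]
  split_ifs <;> rfl

theorem op23_E (a b c d : Fin 4) : op23 (E a b c d) = ∑ k, E3 k a b k c d := by
  ext ⟨x₁, x₂, x₃⟩ ⟨y₁, y₂, y₃⟩
  simp only [op23, E, E3, Prod.mk.eta, single_apply, ite_and, mul_ite, mul_one, mul_zero,
    of_apply, Prod.mk.injEq, Matrix.sum_apply, Finset.sum_ite_eq', Finset.mem_univ, reduceIte]
  split_ifs <;> rfl

theorem op12_E_mul_op23_E (a b c d e f g h : Fin 4) :
    op12 (E a b c d) * op23 (E e f g h) = if d = e then E3 a b f c g h else 0 := by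
  simp [op12_E, op23_E, Finset.sum_mul_sum, E3_mul_E3, ite_and]

theorem op23_E_mul_op12_E (a b c d e f g h : Fin 4) :
    op23 (E a b c d) * op12 (E e f g h) = if c = f then E3 e a b g h d else 0 := by
  simp [op12_E, op23_E, Finset.sum_mul_sum, E3_mul_E3, ite_and]

theorem E3_mul_op12_E (u v w x y z a b c d : Fin 4) :
    E3 u v w x y z * op12 (E a b c d) = if x = a ∧ y = b then E3 u v w c d z else 0 := by
  simp [op12_E, Finset.mul_sum, E3_mul_E3, ite_and]

theorem E3_mul_op23_E (u v w x y z a b c d : Fin 4) :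
    E3 u v w x y z * op23 (E a b c d) = if y = a ∧ z = b then E3 u v w x c d else 0 := by
  simp [op23_E, Finset.mul_sum, E3_mul_E3, ite_and]

def IsBraidSolution (R : Matrix (Fin 4 × Fin 4) (Fin 4 × Fin 4) ℂ) : Prop :=
  op12 R * op23 R * op12 R = op23 R * op12 R * op23 R

def rMatrix (A B S : ℂ) : Matrix (Fin 4 × Fin 4) (Fin 4 × Fin 4) ℂ :=
  E 0 0 0 0
  + (-A ^ 2) • E 1 1 1 1 + (-A ^ 2) • E 2 2 2 2
  + (A ^ 2 * B ^ 2) • E 3 3 3 3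
  + (1 - A ^ 2) • E 1 0 1 0
  + (A ^ 2 * (B ^ 2 - 1)) • E 3 2 3 2
  + A • E 0 1 1 0 + A • E 0 2 2 0 + A • E 1 0 0 1 + A • E 2 0 0 2
  + (A ^ 2 * B) • E 1 3 3 1 + (A ^ 2 * B) • E 2 3 3 2
  + (A ^ 2 * B) • E 3 1 1 3 + (A ^ 2 * B) • E 3 2 2 3
  + A ^ 2 • E 0 3 3 0 + A ^ 2 • E 3 0 0 3
  + (-(A * B)) • E 1 2 2 1 + (-(A * B)) • E 2 1 1 2
  + (-S) • E 3 0 1 2 + (-S) • E 1 2 3 0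

set_option maxHeartbeats 4000000 in
theorem isBraidSolution_rMatrix {A B S : ℂ} (hS : S ^ 2 = A ^ 2 * (A ^ 2 - 1) * (B ^ 2 - 1)) :
    IsBraidSolution (rMatrix A B S) := by
  simp only [IsBraidSolution, rMatrix, op12_add, op12_smul, op23_add, op23_smul, add_mul,
    mul_add, smul_mul_assoc, mul_smul_comm, op12_E_mul_op23_E, op23_E_mul_op12_E,
    E3_mul_op12_E, E3_mul_op23_E, Fin.reduceEq, and_true, and_false, and_self, reduceIte,
    smul_zero, add_zero, zero_add, smul_add]
  -- Coefficient identities in which `S` occurs twice hold only modulo `hS`.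
  match_scalars
  all_goals first
    | ring1
    | linear_combination hS
    | linear_combination A ^ 2 * hS
    | linear_combination -A ^ 2 * hS
    | linear_combination -(A ^ 2 * B ^ 2) * hS

theorem R2_eq_rMatrix {p Q : ℝ} (hp : p ≠ 0) (hQ : Q ≠ 0) :
    R2 p Q = rMatrix (p * Q⁻¹ : ℝ) (p * Q : ℝ)
      (p ^ 2 * Q⁻¹ * √((p * Q⁻¹ - p⁻¹ * Q) * (p * Q - p⁻¹ * Q⁻¹)) : ℝ) := by
  have hp' : (p : ℂ) ≠ 0 := Complex.ofReal_ne_zero.2 hp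
  have hQ' : (Q : ℂ) ≠ 0 := Complex.ofReal_ne_zero.2 hQ
  simp only [R2, rMatrix]
  push_cast
  match_scalars <;> field_simp
  ring

theorem sub_inv_mul_sub_inv_nonneg {K : Type*} [Field K] [LinearOrder K] [IsStrictOrderedRing K]
    {x y : K} (hx : 1 ≤ x) (hy : 1 ≤ y) :
    0 ≤ (x - x⁻¹) * (y - y⁻¹) :=
  mul_nonneg (sub_nonneg.2 ((inv_le_one_of_one_le₀ hx).trans hx))
    (sub_nonneg.2 ((inv_le_one_of_one_le₀ hy).trans hy))

theorem isBraidSolution_R2 {p Q : ℝ} (hp : p ≠ 0) (hQ : Q ≠ 0)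
    (hu : 0 ≤ (p * Q⁻¹ - p⁻¹ * Q) * (p * Q - p⁻¹ * Q⁻¹)) :
    IsBraidSolution (R2 p Q) := by
  rw [R2_eq_rMatrix hp hQ]
  apply isBraidSolution_rMatrix
  have hS : (p ^ 2 * Q⁻¹ * √((p * Q⁻¹ - p⁻¹ * Q) * (p * Q - p⁻¹ * Q⁻¹))) ^ 2 =
      (p * Q⁻¹) ^ 2 * ((p * Q⁻¹) ^ 2 - 1) * ((p * Q) ^ 2 - 1) := by
    rw [mul_pow, Real.sq_sqrt hu]
    field_simp
  exact_mod_cast hS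

/-- The quantum R matrix `Ř²` satisfies the braid-form quantum Yang–Baxter equation. -/
theorem R2_QYBE (q α : ℝ) (hq : 1 < q) (hα : 0 < α)
    (p Q : ℝ) (hp : p = q ^ (α + 1 / 2)) (hQ : Q = q ^ ((1 : ℝ) / 2)) :
    op12 (R2 p Q) * op23 (R2 p Q) * op12 (R2 p Q) =
      op23 (R2 p Q) * op12 (R2 p Q) * op23 (R2 p Q) := by
  have hq₀ : 0 < q := one_pos.trans hq
  have hp₀ : p ≠ 0 := by rw [hp]; positivity
  have hQ₀ : Q ≠ 0 := by rw [hQ]; positivity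
  have hA : p * Q⁻¹ = q ^ α := by
    rw [hp, hQ, ← Real.rpow_neg hq₀.le, ← Real.rpow_add hq₀]; ring_nf
  have hB : p * Q = q ^ (α + 1) := by
    rw [hp, hQ, ← Real.rpow_add hq₀]; ring_nf
  apply isBraidSolution_R2 hp₀ hQ₀
  rw [show p⁻¹ * Q = (p * Q⁻¹)⁻¹ by rw [mul_inv, inv_inv], ← mul_inv, hA, hB]
  exact sub_inv_mul_sub_inv_nonneg (Real.one_le_rpow hq.le hα.le)
    (Real.one_le_rpow hq.le (by linarith))
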